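/- arXiv:2410.04969 — 2 statements merged into one kernel-verified Lean document; each statement's English description precedes it below -/
import Mathlib

section
/- The ℂ-vector space of homogeneous polynomials of degree 3 in ℂ[x,y,z] that vanish at the nine projective points [0:1:1], [1:0:1], [0:−5:1], [0:10:3], [−5:0:1], [10:0:3], [1:−1:0], [1:4:1], [4:1:1] has dimension 2. -/
open MvPolynomial

noncomputable section

/-- The conic `Q = x² + y² + z² − 2xy − 2xz − 2yz`. -/
def Q : MvPolynomial (Fin 3) ℂ :=
  X 0 ^ 2 + X 1 ^ 2 + X 2 ^ 2 - 2 * X 0 * X 1 - 2 * X 0 * X 2 - 2 * X 1 * X 2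

/-- Coordinates of the nine points. -/
def pts : Fin 9 → (Fin 3 → ℂ) :=
  ![![0, 1, 1], ![1, 0, 1], ![0, (-5), 1], ![0, 10, 3], ![(-5), 0, 1], ![10, 0, 3], ![1, (-1), 0], ![1, 4, 1], ![4, 1, 1]]

/-!
The nine points lie by threes on the lines `x = 0`, `y = 0` and `x + y = 5z`. On `y = 0` a cubic
through the three points there restricts to a multiple of the binary form
`(x − z)(x + 5z)(3x − 10z)`, so its coefficients of `x³, x²z, xz²` are fixed by its
`z³`-coefficient, and symmetrically on `x = 0`. The three points on `x + y = 5z` then fix the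
coefficients of `x²y` and `xy²` in terms of those of `xyz` and `z³`. Hence the cubics through the
nine points form a pencil, parametrized linearly and injectively by the coefficients of `xyz`
and `z³`.
-/

def cubicExponent : Fin 10 → Fin 3 → ℕ :=
  ![![3, 0, 0], ![2, 1, 0], ![2, 0, 1], ![1, 2, 0], ![1, 1, 1],
    ![1, 0, 2], ![0, 3, 0], ![0, 2, 1], ![0, 1, 2], ![0, 0, 3]]

def cubicMonomial (i : Fin 10) : Fin 3 →₀ ℕ := Finsupp.equivFunOnFinite.symm (cubicExponent i)

lemma cubicMonomial_injective : Function.Injective cubicMonomial :=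
  Finsupp.equivFunOnFinite.symm.injective.comp (by decide)

lemma degree_cubicMonomial (i : Fin 10) : (cubicMonomial i).degree = 3 := by
  rw [Finsupp.degree_eq_sum]
  fin_cases i <;> rfl

lemma exists_cubicMonomial_eq {d : Fin 3 →₀ ℕ} (hd : d.degree = 3) :
    ∃ i, cubicMonomial i = d := by
  have hexp : ∀ a b c : Fin 4, a.val + b.val + c.val = 3 →
      ∃ i, cubicExponent i = ![a.val, b.val, c.val] := by decide
  rw [Finsupp.degree_eq_sum, Fin.sum_univ_three] at hd
  obtain ⟨i, hi⟩ := hexp ⟨d 0, by omega⟩ ⟨d 1, by omega⟩ ⟨d 2, by omega⟩ hd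
  refine ⟨i, Finsupp.ext fun j => ?_⟩
  fin_cases j <;> simp [cubicMonomial, hi]

section CubicCoefficients

variable {R : Type*} [CommSemiring R]

def cubicOfCoeffs : (Fin 10 → R) →ₗ[R] MvPolynomial (Fin 3) R :=
  ∑ i, (monomial (cubicMonomial i)).comp (LinearMap.proj i)

lemma cubicOfCoeffs_apply (c : Fin 10 → R) :
    cubicOfCoeffs c = ∑ i, monomial (cubicMonomial i) (c i) := by
  simp [cubicOfCoeffs]

lemma isHomogeneous_cubicOfCoeffs (c : Fin 10 → R) : (cubicOfCoeffs c).IsHomogeneous 3 := by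
  rw [cubicOfCoeffs_apply]
  exact IsHomogeneous.sum _ _ _ fun i _ => isHomogeneous_monomial _ (degree_cubicMonomial i)

lemma coeff_cubicOfCoeffs (c : Fin 10 → R) (i : Fin 10) :
    coeff (cubicMonomial i) (cubicOfCoeffs c) = c i := by
  simp [cubicOfCoeffs_apply, coeff_sum, coeff_monomial, cubicMonomial_injective.eq_iff]

lemma MvPolynomial.IsHomogeneous.eq_cubicOfCoeffs {F : MvPolynomial (Fin 3) R}
    (hF : F.IsHomogeneous 3) : F = cubicOfCoeffs fun i => coeff (cubicMonomial i) F := by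
  ext d
  by_cases hd : d.degree = 3
  · obtain ⟨i, rfl⟩ := exists_cubicMonomial_eq hd
    rw [coeff_cubicOfCoeffs]
  · rw [hF.coeff_eq_zero hd, (isHomogeneous_cubicOfCoeffs _).coeff_eq_zero hd]

lemma eval_cubicOfCoeffs (c : Fin 10 → R) (p : Fin 3 → R) :
    eval p (cubicOfCoeffs c) = ∑ i, c i * ∏ j, p j ^ cubicExponent i j := by
  simp [cubicOfCoeffs_apply, eval_monomial, Finsupp.prod_fintype, cubicMonomial]

end CubicCoefficients

open scoped Matrix

/-- The columns are the coefficient vectors of `xy(5z − x − y)/5` and of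
`A(x, z) + A(y, z) − z³ − xy(x + y)/250`, where `A(x, z) = (x − z)(x + 5z)(3x − 10z)/50`;
rows `4` and `9` (the monomials `xyz` and `z³`) form the identity. -/
def pencilMatrix : Matrix (Fin 10) (Fin 2) ℂ :=
  !![0, 3/50; -1/5, -1/250; 0, 1/25; -1/5, -1/250; 1, 0;
     0, -11/10; 0, 3/50; 0, 1/25; 0, -11/10; 0, 1]

lemma pencilMatrix_mulVec_vanishes (v : Fin 2 → ℂ) (k : Fin 9) :
    ∑ i, (pencilMatrix *ᵥ v) i * ∏ j, pts k j ^ cubicExponent i j = 0 := by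
  fin_cases k <;>
    simp [pencilMatrix, Matrix.mulVec, dotProduct, Fin.sum_univ_succ, pts, cubicExponent,
      Fin.prod_univ_three] <;> ring

lemma eq_pencilMatrix_mulVec_of_vanishes (c : Fin 10 → ℂ)
    (h : ∀ k, ∑ i, c i * ∏ j, pts k j ^ cubicExponent i j = 0) :
    c = pencilMatrix *ᵥ ![c 4, c 9] := by
  have g0 := h 0; have g2 := h 2; have g3 := h 3
  have g1 := h 1; have g4 := h 4; have g5 := h 5
  have g6 := h 6; have g7 := h 7; have g8 := h 8
  simp [Fin.sum_univ_succ, Fin.prod_univ_three, pts, cubicExponent] at g0 g1 g2 g3 g4 g5 g6 g7 g8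
  have h0 : c 0 = 3 / 50 * c 9 := by
    linear_combination (-1/14 : ℂ) * g1 - (1/250 : ℂ) * g4 + (1/1750 : ℂ) * g5
  have h2 : c 2 = 1 / 25 * c 9 := by
    linear_combination (-5/42 : ℂ) * g1 + (13/750 : ℂ) * g4 + (2/875 : ℂ) * g5
  have h5 : c 5 = -11 / 10 * c 9 := by
    linear_combination (25/21 : ℂ) * g1 - (1/75 : ℂ) * g4 - (1/350 : ℂ) * g5
  have h6 : c 6 = 3 / 50 * c 9 := by
    linear_combination (-1/14 : ℂ) * g0 - (1/250 : ℂ) * g2 + (1/1750 : ℂ) * g3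
  have h7 : c 7 = 1 / 25 * c 9 := by
    linear_combination (-5/42 : ℂ) * g0 + (13/750 : ℂ) * g2 + (2/875 : ℂ) * g3
  have h8 : c 8 = -11 / 10 * c 9 := by
    linear_combination (25/21 : ℂ) * g0 - (1/75 : ℂ) * g2 - (1/350 : ℂ) * g3
  have h1 : c 1 = -1 / 5 * c 4 - 1 / 250 * c 9 := by
    linear_combination (-4/5 : ℂ) * g6 + (1/20 : ℂ) * g7 + (3/4 : ℂ) * h0 - (1/20 : ℂ) * h2
      - (1/20 : ℂ) * h5 - 4 * h6 - (4/5 : ℂ) * h7 - (1/5 : ℂ) * h8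
  have h3 : c 3 = -1 / 5 * c 4 - 1 / 250 * c 9 := by
    linear_combination g6 + h1 - h0 + h6
  ext i
  fin_cases i <;>
    simp [pencilMatrix, Matrix.mulVec, dotProduct, h0, h1, h2, h3, h5, h6, h7, h8] <;> ring

def pencilCubic : (Fin 2 → ℂ) →ₗ[ℂ] MvPolynomial (Fin 3) ℂ :=
  cubicOfCoeffs ∘ₗ Matrix.toLin' pencilMatrix

lemma pencilCubic_injective : Function.Injective pencilCubic := by
  refine Function.LeftInverse.injective
    (g := fun F => ![coeff (cubicMonomial 4) F, coeff (cubicMonomial 9) F]) fun v => ?_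
  ext i
  fin_cases i <;> simp [pencilCubic, coeff_cubicOfCoeffs, pencilMatrix, dotProduct]

lemma cubics_vanishing_at_pts_eq_range_pencilCubic :
    homogeneousSubmodule (Fin 3) ℂ 3 ⊓
        ⨅ i : Fin 9, LinearMap.ker (aeval (pts i)).toLinearMap =
      LinearMap.range pencilCubic := by
  ext F
  simp only [Submodule.mem_inf, Submodule.mem_iInf, LinearMap.mem_ker, AlgHom.toLinearMap_apply,
    aeval_eq_eval, LinearMap.mem_range]
  rw [mem_homogeneousSubmodule]
  constructor
  · rintro ⟨hF : F.IsHomogeneous 3, hvan⟩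
    set c : Fin 10 → ℂ := fun i => coeff (cubicMonomial i) F
    have hc : c = pencilMatrix *ᵥ ![c 4, c 9] := by
      refine eq_pencilMatrix_mulVec_of_vanishes c fun k => ?_
      rw [← eval_cubicOfCoeffs, ← hF.eq_cubicOfCoeffs]
      exact hvan k
    exact ⟨![c 4, c 9], by rw [hF.eq_cubicOfCoeffs]; exact congrArg cubicOfCoeffs hc.symm⟩
  · rintro ⟨v, rfl⟩
    exact ⟨isHomogeneous_cubicOfCoeffs _, fun k => by
      rw [pencilCubic, LinearMap.comp_apply, Matrix.toLin'_apply, eval_cubicOfCoeffs]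
      exact pencilMatrix_mulVec_vanishes v k⟩

theorem stmt2 :
    Module.finrank ℂ
      ↥(homogeneousSubmodule (Fin 3) ℂ 3 ⊓
        ⨅ i : Fin 9, LinearMap.ker (aeval (pts i)).toLinearMap) = 2 := by
  rw [cubics_vanishing_at_pts_eq_range_pencilCubic,
    LinearMap.finrank_range_of_inj pencilCubic_injective, Module.finrank_fin_fun]
end
end

section
/- There exists a homogeneous polynomial D of degree 3 in ℂ[x,y,z] that vanishes at the nine projective points [0:1:1], [1:0:1], [0:−5:1], [0:10:3], [−5:0:1], [10:0:3], [1:−1:0], [1:4:1], [4:1:1] and is divisible by none of the linear forms x, y, x+y−5z. -/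
open MvPolynomial

noncomputable section

theorem MvPolynomial.not_dvd_of_eval_eq_zero {σ R : Type*} [CommSemiring R]
    {L D : MvPolynomial σ R} (p : σ → R) (hL : eval p L = 0) (hD : eval p D ≠ 0) : ¬ L ∣ D := by
  rintro ⟨c, rfl⟩
  simp [hL] at hD

theorem MvPolynomial.isHomogeneous_C_mul_X_mul_X_mul_X {σ R : Type*} [CommSemiring R]
    (a : R) (i j k : σ) : (C a * X i * X j * X k : MvPolynomial σ R).IsHomogeneous 3 :=
  (((isHomogeneous_C σ a).mul (isHomogeneous_X R i)).mul (isHomogeneous_X R j)).mul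
    (isHomogeneous_X R k)

/-- On the sides `x = 0`, `y = 0` and `x + y = 5z` of the triangle this cubic restricts to
`(y + 5z)(3y − 10z)(y − z)`, `(x + 5z)(3x − 10z)(x − z)` and `2z(4x − y)(x − 4y)`, each a nonzero cubic
vanishing exactly at the listed points on that side. -/
def nineCubic : MvPolynomial (Fin 3) ℂ :=
  C 3 * X 0 * X 0 * X 0 + C 3 * X 1 * X 1 * X 1 + C 2 * X 0 * X 0 * X 2 + C 2 * X 1 * X 1 * X 2
    - C 1 * X 0 * X 1 * X 2 - C 55 * X 0 * X 2 * X 2 - C 55 * X 1 * X 2 * X 2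
    + C 50 * X 2 * X 2 * X 2

theorem nineCubic_isHomogeneous : nineCubic.IsHomogeneous 3 := by
  unfold nineCubic
  repeat' first
    | apply IsHomogeneous.add | apply IsHomogeneous.sub
    | exact isHomogeneous_C_mul_X_mul_X_mul_X _ _ _ _

theorem eval_nineCubic (a b c : ℂ) : eval ![a, b, c] nineCubic =
    3 * a ^ 3 + 3 * b ^ 3 + 2 * a ^ 2 * c + 2 * b ^ 2 * c - a * b * c - 55 * a * c ^ 2
      - 55 * b * c ^ 2 + 50 * c ^ 3 := by
  simp only [nineCubic, C_1, one_mul, map_add, map_sub, map_mul, eval_C, eval_X,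
    Matrix.cons_val_zero, Matrix.cons_val_one, Matrix.cons_val]
  ring

theorem stmt14 :
    ∃ D : MvPolynomial (Fin 3) ℂ, D.IsHomogeneous 3 ∧
      (∀ i : Fin 9, eval (pts i) D = 0) ∧
      ¬ (X 0 ∣ D) ∧ ¬ (X 1 ∣ D) ∧ ¬ ((X 0 + X 1 - 5 * X 2) ∣ D) := by
  refine ⟨nineCubic, nineCubic_isHomogeneous, ?_, ?_, ?_, ?_⟩
  · intro i
    fin_cases i <;> norm_num [pts, eval_nineCubic]
  · exact not_dvd_of_eval_eq_zero ![0, 5, 1] (by simp) (by rw [eval_nineCubic]; norm_num)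
  · exact not_dvd_of_eval_eq_zero ![5, 0, 1] (by simp) (by rw [eval_nineCubic]; norm_num)
  · exact not_dvd_of_eval_eq_zero ![5, 0, 1] (by simp) (by rw [eval_nineCubic]; norm_num)
end
end
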